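/- arXiv:1507.02821 — 2 statements merged into one kernel-verified Lean document; each statement's English description precedes it below -/
import Mathlib

section
/- Let A, B ∈ ℂ^{M×M} be unitary matrices (a pair of orthonormal bases) with mutual coherence μ_m, and let x, z ∈ ℂ^M be nonzero vectors satisfying A x = B z. Then 1/μ_m² ≤ δ(x) · δ(z). -/
/-!
Since `A` and `B` are unitary, `A x = B z` gives `x = (Aᴴ B) z` and `z = (Aᴴ B)ᴴ x`, and the
entries of `Aᴴ B` are the inner products `a_iᴴ b_j`, all of modulus at most `μ_m`. Hence
`‖x‖_∞ ≤ μ_m ‖z‖₁` and `‖z‖_∞ ≤ μ_m ‖x‖₁`, and multiplying the two bounds gives the claim.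
-/

open Matrix

/-- The δ-density of a vector `x ∈ ℂ^N`: the ratio of its ℓ¹-norm to its ℓ∞-norm
(the norm on `Fin N → ℂ` is the sup-norm); for `x = 0` this is `0/0 = 0`. -/
noncomputable def density {N : ℕ} (x : Fin N → ℂ) : ℝ :=
  (∑ i, ‖x i‖) / ‖x‖

/-- The inner product `a_i^H b_j` between the `i`-th column of `A` and the `j`-th column of `B`. -/
noncomputable def colIP {M Na Nb : ℕ} (A : Matrix (Fin M) (Fin Na) ℂ)
    (B : Matrix (Fin M) (Fin Nb) ℂ) (i : Fin Na) (j : Fin Nb) : ℂ :=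
  ∑ m, (starRingEnd ℂ) (A m i) * B m j

/-- A dictionary: all columns have unit Euclidean norm. -/
def UnitColumns {M N : ℕ} (A : Matrix (Fin M) (Fin N) ℂ) : Prop :=
  ∀ j, colIP A A j j = 1

/-- `μ` is the coherence of the dictionary `A`: the maximum of `|a_i^H a_j|` over `i ≠ j`. -/
def IsCoherence {M N : ℕ} (A : Matrix (Fin M) (Fin N) ℂ) (μ : ℝ) : Prop :=
  IsGreatest {r : ℝ | ∃ i j, i ≠ j ∧ r = ‖colIP A A i j‖} μ

/-- `μ` is the mutual coherence of the dictionaries `A` and `B`: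
the maximum of `|a_i^H b_j|` over all `i, j`. -/
def IsMutualCoherence {M Na Nb : ℕ} (A : Matrix (Fin M) (Fin Na) ℂ)
    (B : Matrix (Fin M) (Fin Nb) ℂ) (μ : ℝ) : Prop :=
  IsGreatest {r : ℝ | ∃ i j, r = ‖colIP A B i j‖} μ

theorem Matrix.norm_mulVec_le_of_forall_norm_apply_le {m n 𝕜 : Type*} [Fintype m] [Fintype n]
    [SeminormedRing 𝕜] {C : Matrix m n 𝕜} {c : ℝ} (hc : 0 ≤ c) (hC : ∀ i j, ‖C i j‖ ≤ c)
    (v : n → 𝕜) : ‖C *ᵥ v‖ ≤ c * ∑ j, ‖v j‖ := by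
  refine (pi_norm_le_iff_of_nonneg (by positivity)).2 fun i => ?_
  calc ‖(C *ᵥ v) i‖ ≤ ∑ j, ‖C i j‖ * ‖v j‖ :=
        (norm_sum_le _ _).trans (Finset.sum_le_sum fun j _ => norm_mul_le _ _)
    _ ≤ ∑ j, c * ‖v j‖ := Finset.sum_le_sum fun j _ => by gcongr; exact hC i j
    _ = c * ∑ j, ‖v j‖ := (Finset.mul_sum ..).symm

theorem Matrix.eq_conjTranspose_mul_mulVec_of_mulVec_eq {n R : Type*} [Fintype n] [DecidableEq n]
    [CommRing R] [StarRing R] {A B : Matrix n n R} (hA : A ∈ unitaryGroup n R) {x z : n → R}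
    (h : A *ᵥ x = B *ᵥ z) : x = (Aᴴ * B) *ᵥ z := by
  rw [← mulVec_mulVec, ← h, mulVec_mulVec, ← star_eq_conjTranspose,
    Unitary.star_mul_self_of_mem hA, one_mulVec]

theorem conjTranspose_mul_apply_eq_colIP {M Na Nb : ℕ} (A : Matrix (Fin M) (Fin Na) ℂ)
    (B : Matrix (Fin M) (Fin Nb) ℂ) (i : Fin Na) (j : Fin Nb) :
    (Aᴴ * B) i j = colIP A B i j :=
  rfl

theorem one_div_sq_le_density_mul_density {N N' : ℕ} {x : Fin N → ℂ} {z : Fin N' → ℂ}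
    (hx : x ≠ 0) (hz : z ≠ 0) {μ : ℝ} (hxz : ‖x‖ ≤ μ * ∑ j, ‖z j‖)
    (hzx : ‖z‖ ≤ μ * ∑ i, ‖x i‖) : 1 / μ ^ 2 ≤ density x * density z := by
  have hx0 : 0 < ‖x‖ := norm_pos_iff.2 hx
  have hz0 : 0 < ‖z‖ := norm_pos_iff.2 hz
  have hμ : 0 < μ := by
    by_contra! hμ
    have : μ * ∑ j, ‖z j‖ ≤ 0 :=
      mul_nonpos_of_nonpos_of_nonneg hμ (Finset.sum_nonneg fun j _ => norm_nonneg _)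
    linarith
  rw [density, density, div_mul_div_comm, div_le_div_iff₀ (by positivity) (by positivity)]
  calc 1 * (‖x‖ * ‖z‖) ≤ (μ * ∑ j, ‖z j‖) * (μ * ∑ i, ‖x i‖) := by
        rw [one_mul]; exact mul_le_mul hxz hzx hz0.le (hx0.le.trans hxz)
    _ = (∑ i, ‖x i‖) * (∑ j, ‖z j‖) * μ ^ 2 := by ring

theorem uncertainty_relation_onb_pair {M : ℕ} (A B : Matrix (Fin M) (Fin M) ℂ)
    (hA : A ∈ Matrix.unitaryGroup (Fin M) ℂ) (hB : B ∈ Matrix.unitaryGroup (Fin M) ℂ)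
    (μm : ℝ) (hμm : IsMutualCoherence A B μm)
    (x z : Fin M → ℂ) (hx : x ≠ 0) (hz : z ≠ 0)
    (hxz : A.mulVec x = B.mulVec z) :
    1 / μm ^ 2 ≤ density x * density z := by
  have hμ : 0 ≤ μm := by
    obtain ⟨i, j, rfl⟩ := hμm.1
    exact norm_nonneg _
  have hentry : ∀ i j, ‖(Aᴴ * B) i j‖ ≤ μm := fun i j => by
    rw [conjTranspose_mul_apply_eq_colIP]; exact hμm.2 ⟨i, j, rfl⟩
  have hentry' : ∀ j i, ‖(Aᴴ * B)ᴴ j i‖ ≤ μm := fun j i => by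
    rw [conjTranspose_apply, norm_star]; exact hentry i j
  have hx' : x = (Aᴴ * B) *ᵥ z := eq_conjTranspose_mul_mulVec_of_mulVec_eq hA hxz
  have hz' : z = (Aᴴ * B)ᴴ *ᵥ x := by
    rw [conjTranspose_mul, conjTranspose_conjTranspose]
    exact eq_conjTranspose_mul_mulVec_of_mulVec_eq hB hxz.symm
  refine one_div_sq_le_density_mul_density hx hz ?_ ?_
  · rw [hx']; exact norm_mulVec_le_of_forall_norm_apply_le hμ hentry z
  · rw [hz']; exact norm_mulVec_le_of_forall_norm_apply_le hμ hentry' x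
end

section
/- Let A ∈ ℂ^{M×N} be a dictionary with coherence μ_A and let S ⊆ {1,…,N} satisfy μ_A(|S| − 1) < 1. Then for all indices i, k ∉ S, the orthogonal projection P_S onto the span of the columns {a_j : j ∈ S} satisfies |a_i^H P_S a_k| ≤ μ_A² |S| / (1 − μ_A(|S| − 1)). -/
open Matrix

/-- The submatrix `A_S` of `A` consisting of the columns indexed by `S`. -/
noncomputable def subMat {M N : ℕ} (A : Matrix (Fin M) (Fin N) ℂ) (S : Finset (Fin N)) :
    Matrix (Fin M) {i // i ∈ S} ℂ :=
  fun m i => A m i.val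

/-- The Gram matrix `A_S^H A_S`. -/
noncomputable def gram {M N : ℕ} (A : Matrix (Fin M) (Fin N) ℂ) (S : Finset (Fin N)) :
    Matrix {i // i ∈ S} {i // i ∈ S} ℂ :=
  (subMat A S)ᴴ * subMat A S

/-- The orthogonal projection `P_S = A_S (A_S^H A_S)⁻¹ A_S^H` of `ℂ^M` onto the span
of the columns `{a_j : j ∈ S}` (for invertible Gram matrix `A_S^H A_S`). -/
noncomputable def projMat {M N : ℕ} (A : Matrix (Fin M) (Fin N) ℂ) (S : Finset (Fin N)) :
    Matrix (Fin M) (Fin M) ℂ :=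
  subMat A S * (gram A S)⁻¹ * (subMat A S)ᴴ

/-- The correlation `a_i^H v` between the `i`-th column of `A` and a vector `v ∈ ℂ^M`. -/
noncomputable def corr {M N : ℕ} (A : Matrix (Fin M) (Fin N) ℂ) (i : Fin N)
    (v : Fin M → ℂ) : ℂ :=
  ∑ m, (starRingEnd ℂ) (A m i) * v m

/-- The Euclidean (ℓ²) norm of a vector. -/
noncomputable def l2norm {ι : Type*} [Fintype ι] (v : ι → ℂ) : ℝ :=
  Real.sqrt (∑ i, ‖v i‖ ^ 2)

/-!
The Gram matrix `G = A_Sᴴ A_S` has unit diagonal and off-diagonal entries of modulus at most `μ`,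
so it is strictly diagonally dominant when `μ (|S| - 1) < 1`. Hence `G` is invertible and, in the
sup-norm (the norm of `ι → K`), `‖G⁻¹ y‖ ≤ ‖y‖ / (1 - μ (|S| - 1))`. With `y = A_Sᴴ a_k`, whose
entries are bounded by `μ`, `a_iᴴ P_S a_k = ∑_{j ∈ S} (a_iᴴ a_j) (G⁻¹ y)_j` is a sum of `|S|` terms
of modulus at most `μ · μ / (1 - μ (|S| - 1))`.
-/

namespace Matrix

variable {K ι : Type*} [NormedField K] [Fintype ι] [DecidableEq ι] {G : Matrix ι ι K} {μ : ℝ}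

theorem sum_erase_norm_le_of_offDiag_le (hoff : ∀ j l, j ≠ l → ‖G j l‖ ≤ μ) (k : ι) :
    ∑ l ∈ Finset.univ.erase k, ‖G k l‖ ≤ μ * (Fintype.card ι - 1) := by
  calc ∑ l ∈ Finset.univ.erase k, ‖G k l‖
      ≤ ∑ _l ∈ Finset.univ.erase k, μ :=
        Finset.sum_le_sum fun l hl => hoff k l (Finset.ne_of_mem_erase hl).symm
    _ = μ * (Fintype.card ι - 1) := by
        rw [Finset.sum_const, Finset.card_erase_of_mem (Finset.mem_univ k), Finset.card_univ,
          nsmul_eq_mul, Nat.cast_pred (Fintype.card_pos_iff.mpr ⟨k⟩), mul_comm]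

theorem det_ne_zero_of_offDiag_le (hdiag : ∀ j, G j j = 1)
    (hoff : ∀ j l, j ≠ l → ‖G j l‖ ≤ μ) (hμ : μ * (Fintype.card ι - 1) < 1) : G.det ≠ 0 :=
  det_ne_zero_of_sum_row_lt_diag fun k => by
    rw [hdiag, norm_one]
    exact (sum_erase_norm_le_of_offDiag_le hoff k).trans_lt hμ

theorem sub_mul_norm_le_norm_mulVec (hdiag : ∀ j, G j j = 1)
    (hoff : ∀ j l, j ≠ l → ‖G j l‖ ≤ μ) (z : ι → K) :
    ‖z‖ - μ * (Fintype.card ι - 1) * ‖z‖ ≤ ‖G *ᵥ z‖ := by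
  rcases isEmpty_or_nonempty ι with _ | _
  · simp [Subsingleton.elim z 0]
  suffices ∀ k, ‖z k‖ ≤ ‖G *ᵥ z‖ + μ * (Fintype.card ι - 1) * ‖z‖ by
    linarith [(pi_norm_le_iff_of_nonempty z).2 this]
  intro k
  have hrow : (G *ᵥ z) k = z k + ∑ l ∈ Finset.univ.erase k, G k l * z l := by
    rw [mulVec, dotProduct, ← Finset.add_sum_erase _ _ (Finset.mem_univ k), hdiag, one_mul]
  have hoffDiag : ‖∑ l ∈ Finset.univ.erase k, G k l * z l‖ ≤ μ * (Fintype.card ι - 1) * ‖z‖ :=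
    calc ‖∑ l ∈ Finset.univ.erase k, G k l * z l‖
        ≤ ∑ l ∈ Finset.univ.erase k, ‖G k l‖ * ‖z‖ := by
          refine (norm_sum_le _ _).trans (Finset.sum_le_sum fun l _ => ?_)
          rw [norm_mul]
          exact mul_le_mul_of_nonneg_left (norm_le_pi_norm z l) (norm_nonneg _)
      _ ≤ μ * (Fintype.card ι - 1) * ‖z‖ := by
          rw [← Finset.sum_mul]
          exact mul_le_mul_of_nonneg_right (sum_erase_norm_le_of_offDiag_le hoff k) (norm_nonneg _)
  calc ‖z k‖ = ‖(G *ᵥ z) k - ∑ l ∈ Finset.univ.erase k, G k l * z l‖ := by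
        rw [hrow, add_sub_cancel_right]
    _ ≤ ‖(G *ᵥ z) k‖ + ‖∑ l ∈ Finset.univ.erase k, G k l * z l‖ := norm_sub_le _ _
    _ ≤ ‖G *ᵥ z‖ + μ * (Fintype.card ι - 1) * ‖z‖ := add_le_add (norm_le_pi_norm _ k) hoffDiag

theorem norm_inv_mulVec_le_of_offDiag_le (hdiag : ∀ j, G j j = 1)
    (hoff : ∀ j l, j ≠ l → ‖G j l‖ ≤ μ) (hμ : μ * (Fintype.card ι - 1) < 1) (y : ι → K) :
    ‖G⁻¹ *ᵥ y‖ ≤ ‖y‖ / (1 - μ * (Fintype.card ι - 1)) := by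
  have hG : IsUnit G.det := isUnit_iff_ne_zero.mpr (det_ne_zero_of_offDiag_le hdiag hoff hμ)
  have hbound := sub_mul_norm_le_norm_mulVec hdiag hoff (G⁻¹ *ᵥ y)
  rw [mulVec_mulVec, mul_nonsing_inv G hG, one_mulVec] at hbound
  rw [le_div_iff₀ (by linarith)]
  linarith

end Matrix

theorem IsCoherence.nonneg {M N : ℕ} {A : Matrix (Fin M) (Fin N) ℂ} {μ : ℝ}
    (hμ : IsCoherence A μ) : 0 ≤ μ := by
  obtain ⟨_, _, _, hr⟩ := hμ.1
  exact hr ▸ norm_nonneg _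

theorem IsCoherence.norm_colIP_le {M N : ℕ} {A : Matrix (Fin M) (Fin N) ℂ} {μ : ℝ}
    (hμ : IsCoherence A μ) {i j : Fin N} (hij : i ≠ j) : ‖colIP A A i j‖ ≤ μ :=
  hμ.2 ⟨i, j, hij, rfl⟩

theorem gram_apply {M N : ℕ} (A : Matrix (Fin M) (Fin N) ℂ) (S : Finset (Fin N))
    (j l : {i // i ∈ S}) : gram A S j l = colIP A A j l := by
  simp [_root_.gram, colIP, subMat, mul_apply]

theorem corr_subMat_mulVec {M N : ℕ} (A : Matrix (Fin M) (Fin N) ℂ) (S : Finset (Fin N))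
    (i : Fin N) (w : {j // j ∈ S} → ℂ) :
    corr A i (subMat A S *ᵥ w) = ∑ j : {j // j ∈ S}, colIP A A i j * w j := by
  simp only [corr, mulVec, dotProduct, subMat, colIP, Finset.mul_sum, Finset.sum_mul, mul_assoc]
  exact Finset.sum_comm

theorem corr_projMat_mulVec {M N : ℕ} (A : Matrix (Fin M) (Fin N) ℂ) (S : Finset (Fin N))
    (i k : Fin N) :
    corr A i (projMat A S *ᵥ fun m => A m k) =
      ∑ j : {j // j ∈ S},
        colIP A A i j * ((gram A S)⁻¹ *ᵥ fun l : {j // j ∈ S} => colIP A A l k) j := by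
  have hAk : (subMat A S)ᴴ *ᵥ (fun m => A m k) = fun l : {j // j ∈ S} => colIP A A l k := by
    funext l
    simp [mulVec, dotProduct, subMat, colIP]
  rw [projMat, ← mulVec_mulVec, ← mulVec_mulVec, hAk, corr_subMat_mulVec]

theorem proj_correlation_bound {M N : ℕ} (A : Matrix (Fin M) (Fin N) ℂ) (μ : ℝ)
    (hA : UnitColumns A) (hμ : IsCoherence A μ) (S : Finset (Fin N))
    (hS : μ * ((S.card : ℝ) - 1) < 1) :
    ∀ i k : Fin N, i ∉ S → k ∉ S →
      ‖corr A i ((projMat A S).mulVec (fun m => A m k))‖ ≤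
        μ ^ 2 * (S.card : ℝ) / (1 - μ * ((S.card : ℝ) - 1)) := by
  intro i k hi hk
  have ne_of_notMem {l : Fin N} (hl : l ∉ S) (j : {j // j ∈ S}) : l ≠ j := fun h => hl (h ▸ j.2)
  have hdiag (j : {j // j ∈ S}) : gram A S j j = 1 := by rw [gram_apply, hA]
  have hoff (j l : {j // j ∈ S}) (hjl : j ≠ l) : ‖gram A S j l‖ ≤ μ := by
    rw [gram_apply]
    exact hμ.norm_colIP_le (Subtype.coe_ne_coe.mpr hjl)
  have hy : ‖fun l : {j // j ∈ S} => colIP A A l k‖ ≤ μ :=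
    (pi_norm_le_iff_of_nonneg hμ.nonneg).2 fun l =>
      hμ.norm_colIP_le (ne_of_notMem hk l).symm
  have hz := norm_inv_mulVec_le_of_offDiag_le hdiag hoff (by rwa [Fintype.card_coe])
    fun l : {j // j ∈ S} => colIP A A l k
  rw [Fintype.card_coe] at hz
  replace hz := hz.trans (div_le_div_of_nonneg_right hy (by linarith))
  rw [corr_projMat_mulVec]
  calc _ ≤ ∑ _j : {j // j ∈ S}, μ * (μ / (1 - μ * ((S.card : ℝ) - 1))) := by
        refine (norm_sum_le _ _).trans (Finset.sum_le_sum fun j _ => ?_)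
        rw [norm_mul]
        exact mul_le_mul (hμ.norm_colIP_le (ne_of_notMem hi j)) ((norm_le_pi_norm _ j).trans hz)
          (norm_nonneg _) hμ.nonneg
    _ = μ ^ 2 * (S.card : ℝ) / (1 - μ * ((S.card : ℝ) - 1)) := by
        rw [Finset.sum_const, Finset.card_univ, Fintype.card_coe, nsmul_eq_mul]
        ring
end
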